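/- arXiv:1107.1794 — 4 statements merged into one kernel-verified Lean document; each statement's English description precedes it below -/
import Mathlib

section
/- For any two 2-copulas C₁ and C₂, their fold product A(x,y) = ∫₀¹ ∂₂C₁(x,t)·∂₁C₂(t,y) dt is again a 2-copula, i.e., A has uniform margins (A(x,1)=x, A(1,y)=y, A(x,0)=A(0,y)=0) and is 2-increasing. -/
open MeasureTheory ProbabilityTheory Set Filter

/-- A 2-copula on `[0,1]²`. -/
def IsCopula (C : ℝ → ℝ → ℝ) : Prop :=
  (∀ x ∈ Icc (0:ℝ) 1, C x 0 = 0) ∧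
  (∀ y ∈ Icc (0:ℝ) 1, C 0 y = 0) ∧
  (∀ x ∈ Icc (0:ℝ) 1, C x 1 = x) ∧
  (∀ y ∈ Icc (0:ℝ) 1, C 1 y = y) ∧
  (∀ x₁ x₂ y₁ y₂ : ℝ, x₁ ∈ Icc (0:ℝ) 1 → x₂ ∈ Icc (0:ℝ) 1 → y₁ ∈ Icc (0:ℝ) 1 →
    y₂ ∈ Icc (0:ℝ) 1 → x₁ ≤ x₂ → y₁ ≤ y₂ →
    0 ≤ C x₂ y₂ - C x₂ y₁ - C x₁ y₂ + C x₁ y₁)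

/-- The fold product of two copulas:
`(C₁ ∗ C₂)(x,y) = ∫₀¹ ∂₂C₁(x,t) ∂₁C₂(t,y) dt`. -/
noncomputable def foldProd (C₁ C₂ : ℝ → ℝ → ℝ) : ℝ → ℝ → ℝ := fun x y =>
  ∫ t in (0:ℝ)..1, deriv (fun s => C₁ x s) t * deriv (fun s => C₂ s y) t

open scoped Topology NNReal

/-!
Each section `t ↦ C(x,t)` of a copula is monotone, and so is `t ↦ t - C(x,t)` (compare with the
section at `x = 1`), so it is `1`-Lipschitz on `[0,1]`. Hence it is absolutely continuous, its
derivative is bounded by `1` and integrates back to `C(x,1) - C(x,0) = x`, which gives the margins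
of the fold product since `∂₁C₂(t,1) = 1` and `∂₁C₂(t,0) = 0`. The rectangle inequality of the fold
product is the integral of `(∂₂C₁(x₂,t) - ∂₂C₁(x₁,t)) (∂₁C₂(t,y₂) - ∂₁C₂(t,y₁))`, and both factors
are a.e. derivatives of functions that are monotone by the rectangle inequalities of `C₁` and `C₂`.
The left margins follow from the right ones by transposing both copulas.
-/

theorem MonotoneOn.deriv_nonneg_of_mem_nhds {g : ℝ → ℝ} {s : Set ℝ} {x : ℝ}
    (hg : MonotoneOn g s) (hs : s ∈ 𝓝 x) : 0 ≤ deriv g x := by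
  rw [← derivWithin_of_mem_nhds hs]
  exact hg.derivWithin_nonneg

theorem LipschitzOnWith.of_monotoneOn_of_monotoneOn_id_sub {f : ℝ → ℝ} {s : Set ℝ}
    (hf : MonotoneOn f s) (hf' : MonotoneOn (fun t => t - f t) s) : LipschitzOnWith 1 f s := by
  refine LipschitzOnWith.of_dist_le_mul fun a ha b hb => ?_
  rw [NNReal.coe_one, one_mul, Real.dist_eq, Real.dist_eq]
  wlog hab : a ≤ b generalizing a b
  · rw [abs_sub_comm, abs_sub_comm a]
    exact this b hb a ha (le_of_not_ge hab)
  have h₁ := hf ha hb hab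
  have h₂ := hf' ha hb hab
  rw [abs_of_nonpos (by linarith), abs_of_nonpos (by linarith)]
  linarith

theorem LipschitzOnWith.intervalIntegrable_deriv_mul_deriv {f g : ℝ → ℝ} {K L : ℝ≥0} {a b : ℝ}
    (hab : a ≤ b) (hf : LipschitzOnWith K f (Icc a b)) (hg : LipschitzOnWith L g (Icc a b)) :
    IntervalIntegrable (fun t => deriv f t * deriv g t) volume a b := by
  refine (intervalIntegrable_const (c := (K * L : ℝ))).mono_fun'
    ((measurable_deriv f).mul (measurable_deriv g)).aestronglyMeasurable ?_
  rw [uIoc_of_le hab, ← Measure.restrict_congr_set Ioo_ae_eq_Ioc]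
  refine ae_restrict_of_forall_mem measurableSet_Ioo fun t ht => ?_
  have hI : Icc a b ∈ 𝓝 t := Icc_mem_nhds ht.1 ht.2
  dsimp only
  rw [norm_mul]
  exact mul_le_mul (norm_deriv_le_of_lipschitzOn hI hf) (norm_deriv_le_of_lipschitzOn hI hg)
    (norm_nonneg _) K.coe_nonneg

namespace IsCopula

variable {C : ℝ → ℝ → ℝ}

theorem transpose (hC : IsCopula C) : IsCopula (fun x y => C y x) := by
  obtain ⟨h0, h0', h1, h1', hrect⟩ := hC
  refine ⟨h0', h0, h1', h1, fun x₁ x₂ y₁ y₂ hx₁ hx₂ hy₁ hy₂ hx hy => ?_⟩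
  linarith [hrect y₁ y₂ x₁ x₂ hy₁ hy₂ hx₁ hx₂ hy hx]

theorem monotoneOn_apply_sub (hC : IsCopula C) {x₁ x₂ : ℝ} (hx₁ : x₁ ∈ Icc (0:ℝ) 1)
    (hx₂ : x₂ ∈ Icc (0:ℝ) 1) (hx : x₁ ≤ x₂) :
    MonotoneOn (fun t => C x₂ t - C x₁ t) (Icc 0 1) := fun s hs u hu hsu => by
  linarith [hC.2.2.2.2 x₁ x₂ s u hx₁ hx₂ hs hu hx hsu]

theorem lipschitzOnWith_apply (hC : IsCopula C) {x : ℝ} (hx : x ∈ Icc (0:ℝ) 1) :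
    LipschitzOnWith 1 (C x) (Icc 0 1) := by
  have zero_mem : (0:ℝ) ∈ Icc (0:ℝ) 1 := left_mem_Icc.2 zero_le_one
  have one_mem : (1:ℝ) ∈ Icc (0:ℝ) 1 := right_mem_Icc.2 zero_le_one
  refine .of_monotoneOn_of_monotoneOn_id_sub ?_ ?_
  · refine (hC.monotoneOn_apply_sub zero_mem hx hx.1).congr fun t ht => ?_
    simp [hC.2.1 t ht]
  · refine (hC.monotoneOn_apply_sub hx one_mem hx.2).congr fun t ht => ?_
    simp [hC.2.2.2.1 t ht]

theorem absolutelyContinuousOnInterval_apply (hC : IsCopula C) {x : ℝ}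
    (hx : x ∈ Icc (0:ℝ) 1) : AbsolutelyContinuousOnInterval (C x) 0 1 :=
  (uIcc_of_le (zero_le_one (α := ℝ)) ▸ hC.lipschitzOnWith_apply hx).absolutelyContinuousOnInterval

theorem deriv_apply_zero (hC : IsCopula C) {t : ℝ} (ht : t ∈ Ioo (0:ℝ) 1) :
    deriv (C 0) t = 0 := by
  rw [EventuallyEq.deriv_eq (f := fun _ => 0), deriv_const]
  filter_upwards [Icc_mem_nhds ht.1 ht.2] with s hs using hC.2.1 s hs

theorem deriv_apply_one (hC : IsCopula C) {t : ℝ} (ht : t ∈ Ioo (0:ℝ) 1) :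
    deriv (C 1) t = 1 := by
  rw [EventuallyEq.deriv_eq (f := id), deriv_id]
  filter_upwards [Icc_mem_nhds ht.1 ht.2] with s hs using hC.2.2.2.1 s hs

theorem ae_deriv_sub_deriv_nonneg (hC : IsCopula C) {x₁ x₂ : ℝ} (hx₁ : x₁ ∈ Icc (0:ℝ) 1)
    (hx₂ : x₂ ∈ Icc (0:ℝ) 1) (hx : x₁ ≤ x₂) :
    ∀ᵐ t, t ∈ Ioo (0:ℝ) 1 → 0 ≤ deriv (C x₂) t - deriv (C x₁) t := by
  filter_upwards [(hC.absolutelyContinuousOnInterval_apply hx₁).ae_differentiableAt,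
    (hC.absolutelyContinuousOnInterval_apply hx₂).ae_differentiableAt] with t hd₁ hd₂ ht
  have ht' : t ∈ uIcc (0:ℝ) 1 := Icc_subset_uIcc (Ioo_subset_Icc_self ht)
  rw [← deriv_sub (hd₂ ht') (hd₁ ht')]
  exact (hC.monotoneOn_apply_sub hx₁ hx₂ hx).deriv_nonneg_of_mem_nhds (Icc_mem_nhds ht.1 ht.2)

end IsCopula

section FoldProd

variable {C₁ C₂ : ℝ → ℝ → ℝ}

theorem foldProd_transpose (x y : ℝ) :
    foldProd C₁ C₂ x y = foldProd (fun x y => C₂ y x) (fun x y => C₁ y x) y x := by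
  simp only [foldProd, mul_comm]

theorem foldProd_apply_zero_right (h₂ : IsCopula C₂) (x : ℝ) : foldProd C₁ C₂ x 0 = 0 := by
  rw [foldProd, intervalIntegral.integral_congr_Ioo_of_le zero_le_one (g := fun _ => 0),
    intervalIntegral.integral_zero]
  intro t ht
  dsimp only
  rw [h₂.transpose.deriv_apply_zero ht, mul_zero]

theorem foldProd_apply_one_right (h₁ : IsCopula C₁) (h₂ : IsCopula C₂) {x : ℝ}
    (hx : x ∈ Icc (0:ℝ) 1) : foldProd C₁ C₂ x 1 = x := by
  rw [foldProd, intervalIntegral.integral_congr_Ioo_of_le zero_le_one (g := deriv (C₁ x)),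
    (h₁.absolutelyContinuousOnInterval_apply hx).integral_deriv_eq_sub, h₁.2.2.1 x hx,
    h₁.1 x hx, sub_zero]
  intro t ht
  dsimp only
  rw [h₂.transpose.deriv_apply_one ht, mul_one]

theorem foldProd_rect_nonneg (h₁ : IsCopula C₁) (h₂ : IsCopula C₂) {x₁ x₂ y₁ y₂ : ℝ}
    (hx₁ : x₁ ∈ Icc (0:ℝ) 1) (hx₂ : x₂ ∈ Icc (0:ℝ) 1) (hy₁ : y₁ ∈ Icc (0:ℝ) 1)
    (hy₂ : y₂ ∈ Icc (0:ℝ) 1) (hx : x₁ ≤ x₂) (hy : y₁ ≤ y₂) :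
    0 ≤ foldProd C₁ C₂ x₂ y₂ - foldProd C₁ C₂ x₂ y₁ - foldProd C₁ C₂ x₁ y₂ +
      foldProd C₁ C₂ x₁ y₁ := by
  have hint : ∀ {x y : ℝ}, x ∈ Icc (0:ℝ) 1 → y ∈ Icc (0:ℝ) 1 →
      IntervalIntegrable (fun t => deriv (C₁ x) t * deriv (fun s => C₂ s y) t) volume 0 1 :=
    fun hx hy => (h₁.lipschitzOnWith_apply hx).intervalIntegrable_deriv_mul_deriv zero_le_one
      (h₂.transpose.lipschitzOnWith_apply hy)
  have hexpand : foldProd C₁ C₂ x₂ y₂ - foldProd C₁ C₂ x₂ y₁ - foldProd C₁ C₂ x₁ y₂ +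
      foldProd C₁ C₂ x₁ y₁ = ∫ t in (0:ℝ)..1, (deriv (C₁ x₂) t - deriv (C₁ x₁) t) *
        (deriv (fun s => C₂ s y₂) t - deriv (fun s => C₂ s y₁) t) := by
    simp only [foldProd]
    rw [← intervalIntegral.integral_sub (hint hx₂ hy₂) (hint hx₂ hy₁),
      ← intervalIntegral.integral_sub ((hint hx₂ hy₂).sub (hint hx₂ hy₁)) (hint hx₁ hy₂),
      ← intervalIntegral.integral_add
        (((hint hx₂ hy₂).sub (hint hx₂ hy₁)).sub (hint hx₁ hy₂)) (hint hx₁ hy₁)]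
    congr 1
    ext t
    ring
  rw [hexpand]
  refine intervalIntegral.integral_nonneg_of_ae_restrict zero_le_one ?_
  rw [← Measure.restrict_congr_set Ioo_ae_eq_Icc, EventuallyLE, ae_restrict_iff' measurableSet_Ioo]
  filter_upwards [h₁.ae_deriv_sub_deriv_nonneg hx₁ hx₂ hx,
    h₂.transpose.ae_deriv_sub_deriv_nonneg hy₁ hy₂ hy] with t hf hg ht
  exact mul_nonneg (hf ht) (hg ht)

end FoldProd

/-- The fold product of two 2-copulas is again a 2-copula. -/
theorem foldProd_isCopula (C₁ C₂ : ℝ → ℝ → ℝ) (h₁ : IsCopula C₁) (h₂ : IsCopula C₂) :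
    IsCopula (foldProd C₁ C₂) := by
  refine ⟨fun x _ => foldProd_apply_zero_right h₂ x, fun y _ => ?_,
    fun _ hx => foldProd_apply_one_right h₁ h₂ hx, fun y hy => ?_,
    fun _ _ _ _ => foldProd_rect_nonneg h₁ h₂⟩
  · rw [foldProd_transpose]
    exact foldProd_apply_zero_right h₁.transpose y
  · rw [foldProd_transpose]
    exact foldProd_apply_one_right h₂.transpose h₁.transpose hy
end

section
/- For a stationary Markov chain, the maximal correlation coefficient satisfies ρₙ ≤ (ρ₁)ⁿ, where ρₙ = ρ(σ(X₀), σ(Xₙ)) is the maximal coefficient of correlation between X₀ and Xₙ. -/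
open MeasureTheory ProbabilityTheory Set Filter

/-- The n-fold composition (n-step transition kernel) of a kernel. -/
noncomputable def kpow {α : Type*} [MeasurableSpace α] (κ : Kernel α α) : ℕ → Kernel α α
  | 0 => Kernel.id
  | n + 1 => κ ∘ₖ kpow κ n

/-- The uniform (Lebesgue) probability measure on `[0,1]`. -/
noncomputable def unif01 : Measure ℝ := volume.restrict (Icc (0:ℝ) 1)

/-- `κ` is the transition kernel of the stationary Markov chain generated by the copula `C`
(with uniform marginals), i.e. `κ x [0,y] = ∂₁C(x,y)` for a.e. `x`. -/
def IsCopulaKernel (C : ℝ → ℝ → ℝ) (κ : Kernel ℝ ℝ) : Prop :=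
  ∀ y ∈ Icc (0:ℝ) 1, ∀ᵐ x ∂unif01, κ x (Iic y) = ENNReal.ofReal (deriv (fun s => C s y) x)

/-- Maximal correlation coefficient between the two coordinate σ-algebras,
for a joint law `μ` on a product space: the supremum of `∫ f(x) g(y) dμ`
over mean-zero functions with second moment at most one. -/
noncomputable def maxCorrFS {α : Type*} [MeasurableSpace α] (μ : Measure (α × α)) : ℝ :=
  sSup {r : ℝ | ∃ f g : α → ℝ,
    Measurable f ∧ Measurable g ∧
    MemLp (fun p => f p.1) 2 μ ∧ MemLp (fun p => g p.2) 2 μ ∧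
    (∫ p, f p.1 ∂μ) = 0 ∧ (∫ p, g p.2 ∂μ) = 0 ∧
    (∫ p, (f p.1) ^ 2 ∂μ) ≤ 1 ∧ (∫ p, (g p.2) ^ 2 ∂μ) ≤ 1 ∧
    r = ∫ p, f p.1 * g p.2 ∂μ}


/-!
Write `P g x = ∫ g d(κ x)` for the Markov operator, so that `∫ f(X₀) g(Xₙ) = ∫ f · Pⁿ g dπ`.
For mean-zero `g`, `P g` is again mean-zero by invariance, and
`‖P g‖² = ∫ (P g)(X₀) g(X₁) ≤ ρ₁ ‖P g‖ ‖g‖`, so `P` contracts mean-zero functions in `L²(π)`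
by the factor `ρ₁`. Iterating gives `‖Pⁿ g‖ ≤ ρ₁ⁿ ‖g‖`, and Cauchy–Schwarz finishes.
-/

section L2

variable {β : Type*} [MeasurableSpace β] {μ : Measure β}

theorem integral_mul_le_sqrt_mul_sqrt {f g : β → ℝ} (hf : MemLp f 2 μ) (hg : MemLp g 2 μ) :
    ∫ x, f x * g x ∂μ ≤ √(∫ x, f x ^ 2 ∂μ) * √(∫ x, g x ^ 2 ∂μ) := by
  have habs : ∀ {h : β → ℝ}, MemLp h 2 μ → MemLp (fun x => |h x|) (ENNReal.ofReal 2) μ :=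
    fun hh => by rw [ENNReal.ofReal_ofNat]; exact hh.abs
  calc ∫ x, f x * g x ∂μ ≤ ∫ x, |f x| * |g x| ∂μ :=
        integral_mono (hf.integrable_mul hg) (hf.abs.integrable_mul hg.abs)
          fun x => by rw [← abs_mul]; exact le_abs_self _
    _ ≤ (∫ x, |f x| ^ (2 : ℝ) ∂μ) ^ (1 / 2 : ℝ) * (∫ x, |g x| ^ (2 : ℝ) ∂μ) ^ (1 / 2 : ℝ) :=
        integral_mul_le_Lp_mul_Lq_of_nonneg Real.HolderConjugate.two_two
          (ae_of_all _ fun _ => abs_nonneg _) (ae_of_all _ fun _ => abs_nonneg _)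
          (habs hf) (habs hg)
    _ = √(∫ x, f x ^ 2 ∂μ) * √(∫ x, g x ^ 2 ∂μ) := by
        simp only [Real.rpow_two, sq_abs, Real.sqrt_eq_rpow]

theorem integral_div_sqrt_integral_sq_sq_eq_one {f : β → ℝ} (hf : √(∫ x, f x ^ 2 ∂μ) ≠ 0) :
    ∫ x, (f x / √(∫ x, f x ^ 2 ∂μ)) ^ 2 ∂μ = 1 := by
  simp_rw [div_pow]
  rw [integral_div, Real.sq_sqrt (integral_nonneg fun _ => sq_nonneg _)]
  exact div_self fun h => hf (by rw [h, Real.sqrt_zero])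

theorem sq_integral_le_integral_sq [IsProbabilityMeasure μ] {g : β → ℝ} (hg : MemLp g 2 μ) :
    (∫ x, g x ∂μ) ^ 2 ≤ ∫ x, g x ^ 2 ∂μ := by
  have := variance_nonneg g μ
  rw [variance_eq_sub hg] at this
  simpa [sub_nonneg] using this

end L2

section Marginals

variable {α β E : Type*} [MeasurableSpace α] [MeasurableSpace β] [NormedAddCommGroup E]
  {μ : Measure (α × β)}

theorem integral_comp_fst_of_fst_eq [NormedSpace ℝ E] {ν : Measure α} (hμ : μ.fst = ν)
    {φ : α → E} (hφ : AEStronglyMeasurable φ ν) : ∫ z, φ z.1 ∂μ = ∫ x, φ x ∂ν := by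
  subst hμ
  exact (integral_map measurable_fst.aemeasurable hφ).symm

theorem integral_comp_snd_of_snd_eq [NormedSpace ℝ E] {ν : Measure β} (hμ : μ.snd = ν)
    {φ : β → E} (hφ : AEStronglyMeasurable φ ν) : ∫ z, φ z.2 ∂μ = ∫ y, φ y ∂ν := by
  subst hμ
  exact (integral_map measurable_snd.aemeasurable hφ).symm

theorem memLp_comp_fst_iff_of_fst_eq {ν : Measure α} (hμ : μ.fst = ν) {p : ENNReal}
    {φ : α → E} (hφ : AEStronglyMeasurable φ ν) : MemLp (fun z => φ z.1) p μ ↔ MemLp φ p ν := by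
  subst hμ
  exact (memLp_map_measure_iff hφ measurable_fst.aemeasurable).symm

theorem memLp_comp_snd_iff_of_snd_eq {ν : Measure β} (hμ : μ.snd = ν) {p : ENNReal}
    {φ : β → E} (hφ : AEStronglyMeasurable φ ν) : MemLp (fun z => φ z.2) p μ ↔ MemLp φ p ν := by
  subst hμ
  exact (memLp_map_measure_iff hφ measurable_snd.aemeasurable).symm

end Marginals

section MaxCorr

variable {α : Type*} [MeasurableSpace α] {μ : Measure (α × α)} {f g : α → ℝ}

theorem integral_mul_le_maxCorrFS (hf : Measurable f) (hg : Measurable g)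
    (hf2 : MemLp (fun p => f p.1) 2 μ) (hg2 : MemLp (fun p => g p.2) 2 μ)
    (hf0 : ∫ p, f p.1 ∂μ = 0) (hg0 : ∫ p, g p.2 ∂μ = 0)
    (hf1 : ∫ p, f p.1 ^ 2 ∂μ ≤ 1) (hg1 : ∫ p, g p.2 ^ 2 ∂μ ≤ 1) :
    ∫ p, f p.1 * g p.2 ∂μ ≤ maxCorrFS μ := by
  refine le_csSup ⟨1, ?_⟩ ⟨f, g, hf, hg, hf2, hg2, hf0, hg0, hf1, hg1, rfl⟩
  rintro _ ⟨f, g, -, -, hf2, hg2, -, -, hf1, hg1, rfl⟩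
  calc _ ≤ √(∫ p, f p.1 ^ 2 ∂μ) * √(∫ p, g p.2 ^ 2 ∂μ) := integral_mul_le_sqrt_mul_sqrt hf2 hg2
    _ ≤ 1 * 1 := by gcongr <;> exact Real.sqrt_le_one.2 ‹_›
    _ = 1 := one_mul 1

variable (μ) in
theorem maxCorrFS_nonneg : 0 ≤ maxCorrFS μ := by
  simpa using integral_mul_le_maxCorrFS (μ := μ) (f := 0) (g := 0) measurable_const
    measurable_const MemLp.zero MemLp.zero

theorem integral_mul_le_maxCorrFS_mul_sqrt (hf : Measurable f) (hg : Measurable g)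
    (hf2 : MemLp (fun p => f p.1) 2 μ) (hg2 : MemLp (fun p => g p.2) 2 μ)
    (hf0 : ∫ p, f p.1 ∂μ = 0) (hg0 : ∫ p, g p.2 ∂μ = 0) :
    ∫ p, f p.1 * g p.2 ∂μ ≤
      maxCorrFS μ * √(∫ p, f p.1 ^ 2 ∂μ) * √(∫ p, g p.2 ^ 2 ∂μ) := by
  set a := √(∫ p, f p.1 ^ 2 ∂μ)
  set b := √(∫ p, g p.2 ^ 2 ∂μ)
  by_cases hab : a = 0 ∨ b = 0
  · calc _ ≤ a * b := integral_mul_le_sqrt_mul_sqrt hf2 hg2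
      _ = 0 := by rcases hab with h | h <;> simp [h]
      _ ≤ maxCorrFS μ * a * b := by have := maxCorrFS_nonneg μ; positivity
  push Not at hab
  have hnormalized := integral_mul_le_maxCorrFS (hf.div_const a) (hg.div_const b)
    (by simpa only [div_eq_mul_inv] using hf2.mul_const a⁻¹)
    (by simpa only [div_eq_mul_inv] using hg2.mul_const b⁻¹)
    (by simp [integral_div, hf0]) (by simp [integral_div, hg0])
    (integral_div_sqrt_integral_sq_sq_eq_one hab.1).le
    (integral_div_sqrt_integral_sq_sq_eq_one hab.2).le
  have hab_pos : 0 < a * b :=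
    mul_pos ((Real.sqrt_nonneg _).lt_of_ne' hab.1) ((Real.sqrt_nonneg _).lt_of_ne' hab.2)
  simp_rw [div_mul_div_comm] at hnormalized
  rwa [integral_div, div_le_iff₀ hab_pos, ← mul_assoc] at hnormalized

end MaxCorr

section Kernel

variable {α β E : Type*} [MeasurableSpace α] [MeasurableSpace β] {π : Measure α}

theorem MeasureTheory.Measure.integral_bind [NormedAddCommGroup E] [NormedSpace ℝ E]
    {η : Kernel α β} {g : β → E} (hg : Integrable g (η ∘ₘ π)) :
    ∫ y, g y ∂(η ∘ₘ π) = ∫ x, ∫ y, g y ∂η x ∂π := by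
  rw [Measure.comp_eq_comp_const_apply] at hg ⊢
  rw [Kernel.integral_comp hg, Kernel.const_apply]

theorem MeasureTheory.Integrable.integral_bind [NormedAddCommGroup E] [NormedSpace ℝ E]
    {η : Kernel α β} {g : β → E} (hg : Integrable g (η ∘ₘ π)) :
    Integrable (fun x => ∫ y, g y ∂η x) π := by
  rw [Measure.comp_eq_comp_const_apply] at hg
  simpa using hg.integral_comp

theorem ProbabilityTheory.Kernel.Invariant.integral_integral_kernel {η : Kernel α α}
    (hη : η.Invariant π) {g : α → ℝ} (hg : Integrable g π) :
    ∫ x, ∫ y, g y ∂η x ∂π = ∫ x, g x ∂π := by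
  rw [← Measure.integral_bind (by rwa [hη.def]), hη.def]

theorem ProbabilityTheory.Kernel.Invariant.snd_compProd [SFinite π] {η : Kernel α α}
    [IsSFiniteKernel η] (hη : η.Invariant π) : (π ⊗ₘ η).snd = π := by
  rw [Measure.snd_compProd, hη.def]

theorem ae_integral_comp_eq {γ : Type*} [MeasurableSpace γ] {η : Kernel α β} {κ : Kernel β γ}
    {g : γ → ℝ} (hg : Integrable g ((κ ∘ₖ η) ∘ₘ π)) :
    (fun x => ∫ y, g y ∂(κ ∘ₖ η) x) =ᵐ[π] fun x => ∫ z, ∫ y, g y ∂κ z ∂η x := by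
  filter_upwards [Measure.ae_integrable_of_integrable_comp hg] with x hx
  exact Kernel.integral_comp hx

variable {η : Kernel α β} [IsMarkovKernel η] {g : β → ℝ}

theorem ae_sq_integral_kernel_le (hgm : Measurable g) (hg : MemLp g 2 (η ∘ₘ π)) :
    ∀ᵐ x ∂π, (∫ y, g y ∂η x) ^ 2 ≤ ∫ y, g y ^ 2 ∂η x := by
  filter_upwards [Measure.ae_integrable_of_integrable_comp hg.integrable_sq] with x hx
  exact sq_integral_le_integral_sq ((memLp_two_iff_integrable_sq hgm.aestronglyMeasurable).2 hx)

theorem MeasureTheory.MemLp.integral_kernel (hgm : Measurable g) (hg : MemLp g 2 (η ∘ₘ π)) :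
    MemLp (fun x => ∫ y, g y ∂η x) 2 π := by
  have hm := hgm.stronglyMeasurable.integral_kernel (κ := η)
  refine (memLp_two_iff_integrable_sq hm.aestronglyMeasurable).2 ?_
  refine hg.integrable_sq.integral_bind.mono' (hm.measurable.pow_const 2).aestronglyMeasurable ?_
  filter_upwards [ae_sq_integral_kernel_le hgm hg] with x hx
  rwa [Real.norm_of_nonneg (sq_nonneg _)]

theorem integral_fst_mul_snd_compProd [SFinite π] {f : α → ℝ} (hf : MemLp f 2 π)
    (hg : MemLp g 2 (η ∘ₘ π)) :
    ∫ p, f p.1 * g p.2 ∂(π ⊗ₘ η) = ∫ x, f x * ∫ y, g y ∂η x ∂π := by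
  have hf' := (memLp_comp_fst_iff_of_fst_eq (Measure.fst_compProd π η) hf.1).2 hf
  have hg' := (memLp_comp_snd_iff_of_snd_eq (Measure.snd_compProd π η) hg.1).2 hg
  rw [Measure.integral_compProd (f := fun p => f p.1 * g p.2) (hf'.integrable_mul hg')]
  simp_rw [integral_const_mul]

end Kernel

section Chain

variable {α : Type*} [MeasurableSpace α] {π : Measure α} {κ : Kernel α α}

instance [IsMarkovKernel κ] (n : ℕ) : IsMarkovKernel (kpow κ n) := by
  induction n with
  | zero => exact inferInstanceAs (IsMarkovKernel Kernel.id)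
  | succ n ih => exact inferInstanceAs (IsMarkovKernel (κ ∘ₖ kpow κ n))

theorem ProbabilityTheory.Kernel.Invariant.kpow (hκ : κ.Invariant π) (n : ℕ) :
    (kpow κ n).Invariant π := by
  induction n with
  | zero => exact Measure.bind_dirac
  | succ n ih => exact hκ.comp ih

variable [IsProbabilityMeasure π] [IsMarkovKernel κ] {g : α → ℝ}

theorem sqrt_integral_sq_integral_kernel_le (hκ : κ.Invariant π) (hgm : Measurable g)
    (hg : MemLp g 2 π) (hg0 : ∫ x, g x ∂π = 0) :
    √(∫ x, (∫ y, g y ∂κ x) ^ 2 ∂π) ≤ maxCorrFS (π ⊗ₘ κ) * √(∫ x, g x ^ 2 ∂π) := by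
  set h := fun x => ∫ y, g y ∂κ x
  have hg' : MemLp g 2 (κ ∘ₘ π) := by rwa [hκ.def]
  have hh : MemLp h 2 π := hg'.integral_kernel hgm
  have hhm : Measurable h := hgm.stronglyMeasurable.integral_kernel.measurable
  have hfst := Measure.fst_compProd π κ
  have hsnd := hκ.snd_compProd
  have hcorr := integral_mul_le_maxCorrFS_mul_sqrt (μ := π ⊗ₘ κ) hhm hgm
    ((memLp_comp_fst_iff_of_fst_eq hfst hh.1).2 hh)
    ((memLp_comp_snd_iff_of_snd_eq hsnd hg.1).2 hg)
    (by rw [integral_comp_fst_of_fst_eq hfst hh.1,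
      hκ.integral_integral_kernel (hg.integrable one_le_two), hg0])
    (by rw [integral_comp_snd_of_snd_eq hsnd hg.1, hg0])
  rw [integral_fst_mul_snd_compProd hh hg',
    integral_comp_fst_of_fst_eq hfst (φ := (h · ^ 2)) (hhm.pow_const 2).aestronglyMeasurable,
    integral_comp_snd_of_snd_eq hsnd (φ := (g · ^ 2)) (hgm.pow_const 2).aestronglyMeasurable]
    at hcorr
  have hρ := maxCorrFS_nonneg (π ⊗ₘ κ)
  set a := √(∫ x, h x ^ 2 ∂π)
  have ha : ∫ x, h x * h x ∂π = a ^ 2 := by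
    simp_rw [a, Real.sq_sqrt (integral_nonneg fun _ => sq_nonneg _), sq]
  change ∫ x, h x * h x ∂π ≤ _ at hcorr
  rw [ha] at hcorr
  nlinarith [mul_nonneg hρ (Real.sqrt_nonneg (∫ x, g x ^ 2 ∂π))]

theorem sqrt_integral_sq_integral_kpow_le (hκ : κ.Invariant π) (n : ℕ) (hgm : Measurable g)
    (hg : MemLp g 2 π) (hg0 : ∫ x, g x ∂π = 0) :
    √(∫ x, (∫ y, g y ∂kpow κ n x) ^ 2 ∂π) ≤ maxCorrFS (π ⊗ₘ κ) ^ n * √(∫ x, g x ^ 2 ∂π) := by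
  induction n generalizing g with
  | zero =>
    simp [kpow, Kernel.id_apply, integral_dirac' _ _ hgm.stronglyMeasurable]
  | succ n ih =>
    set h := fun x => ∫ y, g y ∂κ x
    have hg' : MemLp g 2 (κ ∘ₘ π) := by rwa [hκ.def]
    have hcomp : (fun x => ∫ y, g y ∂kpow κ (n + 1) x) =ᵐ[π] fun x => ∫ y, h y ∂kpow κ n x :=
      ae_integral_comp_eq (by rw [(hκ.comp (hκ.kpow n)).def]; exact hg.integrable one_le_two)
    have hρ := maxCorrFS_nonneg (π ⊗ₘ κ)
    calc √(∫ x, (∫ y, g y ∂kpow κ (n + 1) x) ^ 2 ∂π)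
        = √(∫ x, (∫ y, h y ∂kpow κ n x) ^ 2 ∂π) := by
          congr 1
          exact integral_congr_ae (hcomp.fun_comp (· ^ 2))
      _ ≤ maxCorrFS (π ⊗ₘ κ) ^ n * √(∫ x, h x ^ 2 ∂π) :=
          ih hgm.stronglyMeasurable.integral_kernel.measurable (hg'.integral_kernel hgm)
            (by rw [hκ.integral_integral_kernel (hg.integrable one_le_two), hg0])
      _ ≤ maxCorrFS (π ⊗ₘ κ) ^ n * (maxCorrFS (π ⊗ₘ κ) * √(∫ x, g x ^ 2 ∂π)) := by
          gcongr
          exact sqrt_integral_sq_integral_kernel_le hκ hgm hg hg0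
      _ = maxCorrFS (π ⊗ₘ κ) ^ (n + 1) * √(∫ x, g x ^ 2 ∂π) := by ring

theorem integral_fst_mul_snd_kpow_le (hκ : κ.Invariant π) (n : ℕ) {f : α → ℝ}
    (hgm : Measurable g) (hf : MemLp f 2 π) (hg : MemLp g 2 π) (hg0 : ∫ x, g x ∂π = 0)
    (hf1 : ∫ x, f x ^ 2 ∂π ≤ 1) (hg1 : ∫ x, g x ^ 2 ∂π ≤ 1) :
    ∫ p, f p.1 * g p.2 ∂(π ⊗ₘ kpow κ n) ≤ maxCorrFS (π ⊗ₘ κ) ^ n := by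
  have hg' : MemLp g 2 (kpow κ n ∘ₘ π) := by rwa [(hκ.kpow n).def]
  have hρ := maxCorrFS_nonneg (π ⊗ₘ κ)
  calc ∫ p, f p.1 * g p.2 ∂(π ⊗ₘ kpow κ n)
      = ∫ x, f x * ∫ y, g y ∂kpow κ n x ∂π := integral_fst_mul_snd_compProd hf hg'
    _ ≤ √(∫ x, f x ^ 2 ∂π) * √(∫ x, (∫ y, g y ∂kpow κ n x) ^ 2 ∂π) :=
        integral_mul_le_sqrt_mul_sqrt hf (hg'.integral_kernel hgm)
    _ ≤ 1 * (maxCorrFS (π ⊗ₘ κ) ^ n * 1) := by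
        gcongr
        · exact Real.sqrt_le_one.2 hf1
        · refine (sqrt_integral_sq_integral_kpow_le hκ n hgm hg hg0).trans ?_
          gcongr
          exact Real.sqrt_le_one.2 hg1
    _ = maxCorrFS (π ⊗ₘ κ) ^ n := by ring

end Chain

/-- For a stationary Markov chain with invariant law `π` and transition kernel `κ`, the
maximal correlation coefficients `ρₙ`, computed from the joint law `π ⊗ₘ κⁿ` of `(X₀, Xₙ)`,
satisfy `ρₙ ≤ ρ₁ⁿ`. -/
theorem rho_n_le_rho_one_pow {α : Type*} [MeasurableSpace α]
    (π : Measure α) [IsProbabilityMeasure π] (κ : Kernel α α) [IsMarkovKernel κ]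
    (hinv : π.bind κ = π) (n : ℕ) :
    maxCorrFS (π ⊗ₘ kpow κ n) ≤ (maxCorrFS (π ⊗ₘ κ)) ^ n := by
  have hfst := Measure.fst_compProd π (kpow κ n)
  have hsnd := (Kernel.Invariant.kpow hinv n).snd_compProd
  refine Real.sSup_le ?_ (pow_nonneg (maxCorrFS_nonneg _) n)
  rintro _ ⟨f, g, hfm, hgm, hf2, hg2, -, hg0, hf1, hg1, rfl⟩
  rw [memLp_comp_fst_iff_of_fst_eq hfst hfm.aestronglyMeasurable] at hf2
  rw [memLp_comp_snd_iff_of_snd_eq hsnd hgm.aestronglyMeasurable] at hg2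
  rw [integral_comp_snd_of_snd_eq hsnd hgm.aestronglyMeasurable] at hg0
  rw [integral_comp_fst_of_fst_eq hfst (φ := (f · ^ 2))
    (hfm.pow_const 2).aestronglyMeasurable] at hf1
  rw [integral_comp_snd_of_snd_eq hsnd (φ := (g · ^ 2))
    (hgm.pow_const 2).aestronglyMeasurable] at hg1
  exact integral_fst_mul_snd_kpow_le hinv n hgm hf2 hg2 hg0 hf1 hg1
end

section
/- Let C be a 2-copula and suppose there is c > 0 such that the density of the absolutely continuous part of C satisfies c(x,y) ≥ c for a.e. (x,y) ∈ [0,1]². Then with ε = c/(1+c), for a.e. x ∈ [0,1] and every Borel set A ⊆ [0,1] with λ(A) ≤ ε, the transition kernel satisfies P(x,A) ≤ 1 - ε (Doeblin's condition). -/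
/-! The complement `B = [0,1] \ A` has Lebesgue measure at least `1 - ε`. For a.e. `x`, the
kernel `P(x,·)` dominates the measure with density `c(x,·) ≥ c₀`, so `P(x,B) ≥ c₀ (1 - ε) = ε`;
as `P(x,·)` is carried by `[0,1]`, `P(x,A) = 1 - P(x,B) ≤ 1 - ε`. -/

open MeasureTheory ProbabilityTheory Set Filter

namespace MeasureTheory

variable {α : Type*} [MeasurableSpace α] {μ ν : Measure α}

theorem ofReal_one_sub_le_measure_sdiff {S A : Set α} {ε : ℝ} (hS : μ S = 1) (hAS : A ⊆ S)
    (hA : (μ A).toReal ≤ ε) : ENNReal.ofReal (1 - ε) ≤ μ (S \ A) := by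
  have hA_ne_top : μ A ≠ ⊤ := ne_top_of_le_ne_top (hS ▸ ENNReal.one_ne_top) (measure_mono hAS)
  calc ENNReal.ofReal (1 - ε) ≤ ENNReal.ofReal (1 - (μ A).toReal) := by gcongr
    _ = μ S - μ A := by
      rw [ENNReal.ofReal_sub _ ENNReal.toReal_nonneg, ENNReal.ofReal_one,
        ENNReal.ofReal_toReal hA_ne_top, hS]
    _ ≤ μ (S \ A) := le_measure_sdiff

theorem toReal_measure_le_one_sub {S A : Set α} {ε : ℝ} (hS : ν S = 1) (hA : MeasurableSet A)
    (hAS : A ⊆ S) (hε : ENNReal.ofReal ε ≤ ν (S \ A)) : (ν A).toReal ≤ 1 - ε := by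
  have hA_le_one : ν A ≤ 1 := hS ▸ measure_mono hAS
  have hdiff : ν (S \ A) = 1 - ν A :=
    hS ▸ measure_sdiff hAS hA.nullMeasurableSet (ne_top_of_le_ne_top ENNReal.one_ne_top hA_le_one)
  have : ε ≤ 1 - (ν A).toReal := calc
    ε ≤ (ENNReal.ofReal ε).toReal := le_max_left ε 0
    _ ≤ (1 - ν A).toReal := ENNReal.toReal_mono (by simp) (hdiff ▸ hε)
    _ = 1 - (ν A).toReal := by rw [ENNReal.toReal_sub_of_le hA_le_one ENNReal.one_ne_top]; rfl
  linarith

theorem withDensity_ofReal_le_of_ofReal_setIntegral_le [IsFiniteMeasure μ] {f : α → ℝ}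
    (hf : Measurable f) (hf_nonneg : 0 ≤ᵐ[μ] f)
    (hν : ∀ s, MeasurableSet s → ENNReal.ofReal (∫ v in s, f v ∂μ) ≤ ν s) :
    μ.withDensity (fun v => ENNReal.ofReal (f v)) ≤ ν := by
  refine Measure.le_iff.2 fun s hs => ?_
  -- `f` need not be integrable on `s` (the integral would be junk), so exhaust `s` by `{f ≤ n}`.
  set t : ℕ → Set α := fun n => s ∩ {v | f v ≤ n}
  have ht : ∀ n, MeasurableSet (t n) := fun n => hs.inter (measurableSet_le hf measurable_const)
  have ht_mono : Monotone t := fun m n hmn v hv =>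
    ⟨hv.1, (show f v ≤ m from hv.2).trans (Nat.cast_le.2 hmn)⟩
  have ht_union : ⋃ n, t n = s := by
    refine subset_antisymm (iUnion_subset fun n => inter_subset_left) fun v hv => ?_
    exact mem_iUnion.2 ⟨⌈f v⌉₊, hv, Nat.le_ceil (f v)⟩
  rw [← ht_union, ht_mono.measure_iUnion]
  refine iSup_le fun n => ?_
  have hf_int : IntegrableOn f (t n) μ := by
    refine Measure.integrableOn_of_bounded (M := n) (measure_ne_top _ _) hf.aestronglyMeasurable ?_
    filter_upwards [ae_restrict_mem (ht n), ae_restrict_of_ae hf_nonneg] with v hv hv0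
    rw [Real.norm_eq_abs, abs_of_nonneg hv0]
    exact hv.2
  calc μ.withDensity (fun v => ENNReal.ofReal (f v)) (t n)
      = ENNReal.ofReal (∫ v in t n, f v ∂μ) := by
        rw [withDensity_apply _ (ht n),
          ofReal_integral_eq_lintegral_ofReal hf_int (ae_restrict_of_ae hf_nonneg)]
    _ ≤ ν (t n) := hν _ (ht n)
    _ ≤ ν (⋃ n, t n) := measure_mono (subset_iUnion t n)

end MeasureTheory

theorem density_bounded_below_doeblin_general (κ : Kernel ℝ ℝ)
    (hsupp : ∀ᵐ x ∂unif01, κ x (Icc (0:ℝ) 1) = 1)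
    (c : ℝ → ℝ → ℝ) (hm : Measurable (Function.uncurry c))
    (c₀ : ℝ) (hc₀ : 0 < c₀)
    (hlow : ∀ᵐ p ∂(unif01.prod unif01), c₀ ≤ c p.1 p.2)
    (hac : ∀ᵐ x ∂unif01, ∀ A : Set ℝ, MeasurableSet A →
      ENNReal.ofReal (∫ v in A, c x v ∂unif01) ≤ κ x A) :
    ∀ᵐ x ∂unif01, ∀ A : Set ℝ, MeasurableSet A → A ⊆ Icc (0:ℝ) 1 →
      (unif01 A).toReal ≤ c₀ / (1 + c₀) →
      (κ x A).toReal ≤ 1 - c₀ / (1 + c₀) := by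
  set ε := c₀ / (1 + c₀) with hε_def
  have hε : c₀ * (1 - ε) = ε := by rw [hε_def]; field_simp; ring
  have hunif : unif01 (Icc (0:ℝ) 1) = 1 := by simp [unif01]
  have : IsFiniteMeasure unif01 := by unfold unif01; infer_instance
  filter_upwards [hsupp, hac, Measure.ae_ae_of_ae_prod hlow] with x hx_supp hx_ac hx_low
  have hdom : ENNReal.ofReal c₀ • unif01 ≤ κ x := calc
    ENNReal.ofReal c₀ • unif01 ≤ unif01.withDensity (fun v => ENNReal.ofReal (c x v)) := by
      rw [← withDensity_const]
      exact withDensity_mono (hx_low.mono fun v hv => ENNReal.ofReal_le_ofReal hv)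
    _ ≤ κ x := withDensity_ofReal_le_of_ofReal_setIntegral_le (hm.comp measurable_prodMk_left)
      (hx_low.mono fun v hv => hc₀.le.trans hv) hx_ac
  intro A hA hAsub hAle
  refine toReal_measure_le_one_sub hx_supp hA hAsub ?_
  calc ENNReal.ofReal ε = ENNReal.ofReal c₀ * ENNReal.ofReal (1 - ε) := by
        rw [← ENNReal.ofReal_mul hc₀.le, hε]
    _ ≤ ENNReal.ofReal c₀ * unif01 (Icc 0 1 \ A) := by
        gcongr; exact ofReal_one_sub_le_measure_sdiff hunif hAsub hAle
    _ ≤ κ x (Icc 0 1 \ A) := hdom _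

/-- Doeblin condition: if the density of the absolutely continuous part of the copula is
bounded below by `c₀ > 0` a.e., then with `ε = c₀/(1+c₀)`, for a.e. `x` every Borel
`A ⊆ [0,1]` with `λ(A) ≤ ε` satisfies `P(x,A) ≤ 1 − ε`. -/
theorem density_bounded_below_doeblin (C : ℝ → ℝ → ℝ) (hC : IsCopula C)
    (κ : Kernel ℝ ℝ) [IsMarkovKernel κ] (hκ : IsCopulaKernel C κ)
    (hsupp : ∀ᵐ x ∂unif01, κ x (Icc (0:ℝ) 1) = 1)
    (c : ℝ → ℝ → ℝ) (hm : Measurable (Function.uncurry c))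
    (c₀ : ℝ) (hc₀ : 0 < c₀)
    (hlow : ∀ᵐ p ∂(unif01.prod unif01), c₀ ≤ c p.1 p.2)
    (hac : ∀ᵐ x ∂unif01, ∀ A : Set ℝ, MeasurableSet A →
      ENNReal.ofReal (∫ v in A, c x v ∂unif01) ≤ κ x A) :
    ∀ᵐ x ∂unif01, ∀ A : Set ℝ, MeasurableSet A → A ⊆ Icc (0:ℝ) 1 →
      (unif01 A).toReal ≤ c₀ / (1 + c₀) →
      (κ x A).toReal ≤ 1 - c₀ / (1 + c₀) :=
  density_bounded_below_doeblin_general κ hsupp c hm c₀ hc₀ hlow hac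
end

section
/- For a stationary Markov chain, the uniform mixing coefficients satisfy 2φₙ ≤ (2φ₁)ⁿ for all n ≥ 1, where φₙ = ess sup_x sup_B |Pⁿ(x,B) − π(B)|. -/
open MeasureTheory ProbabilityTheory Set Filter
open scoped ENNReal NNReal

/-- The uniform (φ-)mixing coefficient of a transition kernel `κ` with invariant measure `μ`:
`φ = ess sup_x sup_B |κ(x,B) − μ(B)|` (as a value in `ℝ≥0∞`). -/
noncomputable def phiKernel {α : Type*} [MeasurableSpace α] (κ : Kernel α α) (μ : Measure α) : ℝ≥0∞ :=
  essSup (fun x => ⨆ B : {s : Set α // MeasurableSet s},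
    ENNReal.ofReal |(κ x (B : Set α)).toReal - (μ (B : Set α)).toReal|) μ

/-!
For kernels `κ, η` leaving `π` invariant, `φ(κ ∘ η) ≤ 2 φ(κ) φ(η)`; induction on `n` then gives
`2 φₙ ≤ (2 φ₁)ⁿ`. Fix a measurable `B` and put `g y = κ(y, B)`, so that
`(κ ∘ η)(x, B) = ∫ g dη(x, ·)` and, by invariance, `π(B) = ∫ g dπ`. Off a `π`-null set, which by
invariance of `π` under `η` is also `η(x, ·)`-null for `π`-a.e. `x`, `g` takes values in an
interval of length `2 φ(κ)`. By the layer cake formula, integrating a function with values in an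
interval of length `L` against two probability measures whose values on sets differ by at most `d`
gives results at most `L d` apart; here `d = φ(η)`.
-/

section IntegralComparison

variable {α : Type*} [MeasurableSpace α] {μ ν : Measure α}

lemma lintegral_ofReal_le_lintegral_ofReal_add {g : α → ℝ} (hg : Measurable g) {K d : ℝ}
    (hd : 0 ≤ d) (hμ_nonneg : 0 ≤ᵐ[μ] g) (hν_nonneg : 0 ≤ᵐ[ν] g) (hμ_le : ∀ᵐ x ∂μ, g x ≤ K)
    (hμν : ∀ B, MeasurableSet B → μ B ≤ ν B + ENNReal.ofReal d) :
    ∫⁻ x, ENNReal.ofReal (g x) ∂μ ≤ ∫⁻ x, ENNReal.ofReal (g x) ∂ν + ENNReal.ofReal (K * d) := by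
  rw [lintegral_eq_lintegral_meas_lt μ hμ_nonneg hg.aemeasurable,
    lintegral_eq_lintegral_meas_lt ν hν_nonneg hg.aemeasurable]
  have hμ_gt : ∀ t, K < t → μ {x | t < g x} = 0 := fun t ht =>
    measure_mono_null (fun x (hx : t < g x) (hle : g x ≤ K) => (hle.trans_lt ht).asymm hx)
      (ae_iff.1 hμ_le)
  have hlevel : ∀ t ∈ Ioi (0 : ℝ),
      μ {x | t < g x} ≤ (Ioc 0 K).indicator (fun t => ν {x | t < g x} + ENNReal.ofReal d) t := by
    intro t ht
    by_cases htK : t ≤ K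
    · rw [indicator_of_mem (show t ∈ Ioc 0 K from ⟨ht, htK⟩)]
      exact hμν _ (measurableSet_lt measurable_const hg)
    · rw [hμ_gt t (not_le.1 htK)]
      exact zero_le
  calc ∫⁻ t in Ioi 0, μ {x | t < g x}
      ≤ ∫⁻ t in Ioi 0, (Ioc 0 K).indicator (fun t => ν {x | t < g x} + ENNReal.ofReal d) t :=
        setLIntegral_mono_ae' measurableSet_Ioi (ae_of_all _ hlevel)
    _ = (∫⁻ t in Ioc 0 K, ν {x | t < g x}) + ENNReal.ofReal d * volume (Ioc 0 K) := by
        rw [lintegral_indicator measurableSet_Ioc, Measure.restrict_restrict measurableSet_Ioc,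
          inter_eq_left.2 Ioc_subset_Ioi_self, lintegral_add_right _ measurable_const,
          setLIntegral_const]
    _ ≤ (∫⁻ t in Ioi 0, ν {x | t < g x}) + ENNReal.ofReal (K * d) := by
        gcongr
        · exact Ioc_subset_Ioi_self
        · rw [Real.volume_Ioc, sub_zero, ← ENNReal.ofReal_mul hd, mul_comm]

lemma measure_le_add_of_abs_toReal_sub_le [IsFiniteMeasure μ] [IsFiniteMeasure ν] {B : Set α}
    {d : ℝ} (h : |(μ B).toReal - (ν B).toReal| ≤ d) : μ B ≤ ν B + ENNReal.ofReal d :=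
  calc μ B = ENNReal.ofReal (μ B).toReal := (ENNReal.ofReal_toReal (measure_ne_top _ _)).symm
    _ ≤ ENNReal.ofReal ((ν B).toReal + d) :=
      ENNReal.ofReal_le_ofReal (by linarith [le_abs_self ((μ B).toReal - (ν B).toReal)])
    _ = ν B + ENNReal.ofReal d := by
      rw [ENNReal.ofReal_add ENNReal.toReal_nonneg ((abs_nonneg _).trans h),
        ENNReal.ofReal_toReal (measure_ne_top _ _)]

variable [IsProbabilityMeasure μ] [IsProbabilityMeasure ν]

lemma integral_le_integral_add_of_measure_le_add {g : α → ℝ} (hg : Measurable g) {a b d : ℝ}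
    (hd : 0 ≤ d) (hgμ : ∀ᵐ x ∂μ, g x ∈ Icc a b) (hgν : ∀ᵐ x ∂ν, g x ∈ Icc a b)
    (hμν : ∀ B, MeasurableSet B → μ B ≤ ν B + ENNReal.ofReal d) :
    ∫ x, g x ∂μ ≤ ∫ x, g x ∂ν + (b - a) * d := by
  have hnonneg : ∀ ρ : Measure α, (∀ᵐ x ∂ρ, g x ∈ Icc a b) → 0 ≤ᵐ[ρ] fun x => g x - a :=
    fun ρ h => h.mono fun x hx => sub_nonneg.2 hx.1
  have hint : ∀ ρ : Measure α, [IsProbabilityMeasure ρ] → (∀ᵐ x ∂ρ, g x ∈ Icc a b) →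
      Integrable g ρ := fun ρ _ h =>
    (integrable_const (max |a| |b|)).mono' hg.aestronglyMeasurable
      (h.mono fun x hx => abs_le_max_abs_abs hx.1 hx.2)
  have key := lintegral_ofReal_le_lintegral_ofReal_add (hg.sub_const a) hd
    (hnonneg μ hgμ) (hnonneg ν hgν) (hgμ.mono fun x hx => sub_le_sub_right hx.2 a) hμν
  have hintμ : Integrable (fun x => g x - a) μ := (hint μ hgμ).sub (integrable_const a)
  have hintν : Integrable (fun x => g x - a) ν := (hint ν hgν).sub (integrable_const a)
  have hab : a ≤ b := by obtain ⟨x, hx⟩ := hgμ.exists; exact hx.1.trans hx.2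
  have hintegral_nonneg := integral_nonneg_of_ae (hnonneg ν hgν)
  rw [← ofReal_integral_eq_lintegral_ofReal hintμ (hnonneg μ hgμ),
    ← ofReal_integral_eq_lintegral_ofReal hintν (hnonneg ν hgν),
    ← ENNReal.ofReal_add hintegral_nonneg (by nlinarith),
    ENNReal.ofReal_le_ofReal_iff (by nlinarith), integral_sub (hint μ hgμ) (integrable_const a),
    integral_sub (hint ν hgν) (integrable_const a)] at key
  simp only [integral_const, probReal_univ, one_smul] at key
  linarith

lemma abs_integral_sub_integral_le_of_abs_measure_sub_le {g : α → ℝ} (hg : Measurable g)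
    {a b d : ℝ} (hgμ : ∀ᵐ x ∂μ, g x ∈ Icc a b) (hgν : ∀ᵐ x ∂ν, g x ∈ Icc a b)
    (hμν : ∀ B, MeasurableSet B → |(μ B).toReal - (ν B).toReal| ≤ d) :
    |∫ x, g x ∂μ - ∫ x, g x ∂ν| ≤ (b - a) * d := by
  have hd : 0 ≤ d := (abs_nonneg _).trans (hμν ∅ MeasurableSet.empty)
  have h₁ := integral_le_integral_add_of_measure_le_add hg hd hgμ hgν fun B hB =>
    measure_le_add_of_abs_toReal_sub_le (hμν B hB)
  have h₂ := integral_le_integral_add_of_measure_le_add hg hd hgν hgμ fun B hB =>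
    measure_le_add_of_abs_toReal_sub_le ((abs_sub_comm _ _).trans_le (hμν B hB))
  exact abs_sub_le_iff.2 ⟨by linarith, by linarith⟩

end IntegralComparison

section MixingCoefficient

variable {α : Type*} [MeasurableSpace α] (κ : Kernel α α) (μ : Measure α)

lemma ae_ofReal_abs_sub_le_phiKernel : ∀ᵐ x ∂μ, ∀ B, MeasurableSet B →
    ENNReal.ofReal |(κ x B).toReal - (μ B).toReal| ≤ phiKernel κ μ := by
  filter_upwards [ENNReal.ae_le_essSup _] with x hx B hB
  exact (le_iSup (fun B' : {s : Set α // MeasurableSet s} =>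
    ENNReal.ofReal |(κ x B').toReal - (μ B').toReal|) ⟨B, hB⟩).trans hx

lemma phiKernel_le_of_ae {c : ℝ≥0∞} (h : ∀ᵐ x ∂μ, ∀ B, MeasurableSet B →
    ENNReal.ofReal |(κ x B).toReal - (μ B).toReal| ≤ c) : phiKernel κ μ ≤ c :=
  essSup_le_of_ae_le _ (h.mono fun _ hx => iSup_le fun B => hx B B.2)

variable [IsMarkovKernel κ] [IsProbabilityMeasure μ]

lemma phiKernel_le_one : phiKernel κ μ ≤ 1 :=
  phiKernel_le_of_ae κ μ <| ae_of_all _ fun _ _ _ => ENNReal.ofReal_le_one.2 <|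
    abs_sub_le_of_nonneg_of_le ENNReal.toReal_nonneg measureReal_le_one
      ENNReal.toReal_nonneg measureReal_le_one

lemma phiKernel_ne_top : phiKernel κ μ ≠ ∞ :=
  ((phiKernel_le_one κ μ).trans_lt ENNReal.one_lt_top).ne

lemma ae_abs_sub_le_toReal_phiKernel : ∀ᵐ x ∂μ, ∀ B, MeasurableSet B →
    |(κ x B).toReal - (μ B).toReal| ≤ (phiKernel κ μ).toReal := by
  filter_upwards [ae_ofReal_abs_sub_le_phiKernel κ μ] with x hx B hB
  exact (ENNReal.ofReal_le_iff_le_toReal (phiKernel_ne_top κ μ)).1 (hx B hB)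

end MixingCoefficient

lemma integral_toReal_kernel_apply {α β : Type*} [MeasurableSpace α] [MeasurableSpace β]
    (μ : Measure α) (κ : Kernel α β) [IsFiniteKernel κ] {B : Set β} (hB : MeasurableSet B) :
    ∫ y, (κ y B).toReal ∂μ = (μ.bind κ B).toReal := by
  rw [integral_toReal (κ.measurable_coe hB).aemeasurable
    (ae_of_all _ fun _ => measure_lt_top _ _), Measure.bind_apply hB κ.aemeasurable]

theorem phiKernel_comp_le {α : Type*} [MeasurableSpace α] {π : Measure α}
    [IsProbabilityMeasure π] {κ η : Kernel α α} [IsMarkovKernel κ] [IsMarkovKernel η]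
    (hκ : π.bind κ = π) (hη : π.bind η = π) :
    phiKernel (κ ∘ₖ η) π ≤ 2 * phiKernel κ π * phiKernel η π := by
  set t := (phiKernel κ π).toReal
  set c := (phiKernel η π).toReal
  have hκ_ae := ae_abs_sub_le_toReal_phiKernel κ π
  have hκ_ae_ae : ∀ᵐ x ∂π, ∀ᵐ y ∂η x, ∀ B, MeasurableSet B →
      |(κ y B).toReal - (π B).toReal| ≤ t :=
    Measure.ae_ae_of_ae_bind η.aemeasurable (by rwa [hη])
  refine phiKernel_le_of_ae _ _ ?_
  filter_upwards [ae_abs_sub_le_toReal_phiKernel η π, hκ_ae_ae] with x hηx hκx B hB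
  have hIcc : ∀ ρ : Measure α, (∀ᵐ y ∂ρ, ∀ B, MeasurableSet B →
      |(κ y B).toReal - (π B).toReal| ≤ t) →
      ∀ᵐ y ∂ρ, (κ y B).toReal ∈ Icc ((π B).toReal - t) ((π B).toReal + t) := fun ρ h =>
    h.mono fun y hy => by have := abs_sub_le_iff.1 (hy B hB); constructor <;> linarith
  have key := abs_integral_sub_integral_le_of_abs_measure_sub_le
    (κ.measurable_coe hB).ennreal_toReal (hIcc _ hκx) (hIcc _ hκ_ae) hηx
  rw [integral_toReal_kernel_apply _ _ hB, integral_toReal_kernel_apply _ _ hB,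
    ← Kernel.comp_apply, hκ] at key
  calc ENNReal.ofReal |((κ ∘ₖ η) x B).toReal - (π B).toReal|
      ≤ ENNReal.ofReal (2 * t * c) := ENNReal.ofReal_le_ofReal (by linarith)
    _ = 2 * phiKernel κ π * phiKernel η π := by
      rw [ENNReal.ofReal_mul (by positivity), ENNReal.ofReal_mul zero_le_two,
        ENNReal.ofReal_toReal (phiKernel_ne_top κ π),
        ENNReal.ofReal_toReal (phiKernel_ne_top η π), ENNReal.ofReal_ofNat]

section KernelPower

variable {α : Type*} [MeasurableSpace α] (κ : Kernel α α)

instance inst_s10 [IsMarkovKernel κ] (n : ℕ) : IsMarkovKernel (kpow κ n) := by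
  induction n with
  | zero => rw [kpow]; infer_instance
  | succ n ih => rw [kpow]; infer_instance

lemma kpow_one : kpow κ 1 = κ := by rw [kpow, kpow, Kernel.comp_id]

lemma bind_kpow_eq_self {π : Measure α} (h : π.bind κ = π) (n : ℕ) :
    π.bind (kpow κ n) = π := by
  induction n with
  | zero => exact Measure.id_comp
  | succ n ih => rw [kpow, ← Measure.comp_assoc, ih, h]

end KernelPower

/-- For a stationary Markov chain, `2 φₙ ≤ (2 φ₁)ⁿ` for all `n ≥ 1`. -/
theorem two_phi_n_le_pow {α : Type*} [MeasurableSpace α]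
    (π : Measure α) [IsProbabilityMeasure π] (κ : Kernel α α) [IsMarkovKernel κ]
    (hinv : π.bind κ = π) (n : ℕ) (hn : 1 ≤ n) :
    2 * phiKernel (kpow κ n) π ≤ (2 * phiKernel κ π) ^ n := by
  induction n, hn using Nat.le_induction with
  | base => rw [kpow_one, pow_one]
  | succ n _ ih =>
    calc 2 * phiKernel (kpow κ (n + 1)) π
        ≤ 2 * (2 * phiKernel κ π * phiKernel (kpow κ n) π) := by
          rw [kpow]; gcongr; exact phiKernel_comp_le hinv (bind_kpow_eq_self κ hinv n)
      _ = 2 * phiKernel κ π * (2 * phiKernel (kpow κ n) π) := by ring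
      _ ≤ 2 * phiKernel κ π * (2 * phiKernel κ π) ^ n := by gcongr
      _ = (2 * phiKernel κ π) ^ (n + 1) := (pow_succ' _ _).symm
end
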